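/- For Legendre polynomials and k < n, the inner product ⟨P_n + (1+η)P_n', P_k⟩ = ∫₋₁¹ (P_n(η) + (1+η)P_n'(η)) P_k(η) dη equals 2, and consequently the HiPPO-LegS matrix entry A_{nk} = √((2n+1)(2k+1)) for k < n. -/

import Mathlib

open MeasureTheory intervalIntegral Real

/-- Generalized binomial coefficient `C(z, k) = z (z-1) ⋯ (z-k+1) / k!`. -/
noncomputable def genBinom (z : ℝ) (k : ℕ) : ℝ :=
  (∏ i ∈ Finset.range k, (z - i)) / (Nat.factorial k)

/-- Jacobi polynomial `P_n^{(a,b)}(y)` via its explicit finite-sum representation. -/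
noncomputable def jacobiP (a b : ℝ) (n : ℕ) (y : ℝ) : ℝ :=
  ∑ s ∈ Finset.range (n + 1),
    genBinom (n + a) (n - s) * genBinom (n + b) s * ((y - 1) / 2) ^ s * ((y + 1) / 2) ^ (n - s)

/-- The Legendre polynomial of degree `n` (Jacobi with parameters `(0,0)`). -/
noncomputable def legendreP (n : ℕ) (y : ℝ) : ℝ := jacobiP 0 0 n y

section Aux

open Polynomial Finset

/-! ### Combinatorial lemmas -/

lemma altsum_zero : ∀ (n : ℕ) (p : ℤ[X]), p.degree < n →
    ∑ s ∈ range (n+1), (-1)^s * (n.choose s : ℤ) * p.eval (s : ℤ) = 0 := by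
  intro n
  induction n with
  | zero =>
    intro p hp
    have : p = 0 := by
      rwa [← Polynomial.degree_eq_bot, ← Nat.WithBot.lt_zero_iff]
    simp [this]
  | succ n ih =>
    intro p hp
    by_cases hc : p.natDegree = 0
    · obtain ⟨a, rfl⟩ := Polynomial.natDegree_eq_zero.mp hc
      simp only [eval_C, ← mul_assoc]
      rw [← Finset.sum_mul]
      have h := Int.alternating_sum_range_choose (n := n+1)
      simp only [Nat.succ_ne_zero, if_false] at h
      rw [h, zero_mul]
    · set q : ℤ[X] := p - p.comp (X + C 1) with hq
      have hp0 : p ≠ 0 := fun h => hc (by simp [h])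
      have hcompnd : (p.comp (X + C 1)).natDegree = p.natDegree := by
        rw [natDegree_comp, natDegree_X_add_C, mul_one]
      have hcomp0 : p.comp (X + C 1) ≠ 0 := fun h => by
        rw [h, natDegree_zero] at hcompnd; exact hc hcompnd.symm
      have hlc : p.leadingCoeff = (p.comp (X + C 1)).leadingCoeff := by
        rw [leadingCoeff_comp (by rw [natDegree_X_add_C]; exact one_ne_zero),
          (monic_X_add_C (1:ℤ)).leadingCoeff, one_pow, mul_one]
      have hdeq : p.degree = (p.comp (X + C 1)).degree := by
        rw [degree_eq_natDegree hp0, degree_eq_natDegree hcomp0, hcompnd]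
      have hqdeg : q.degree < n := by
        have h1 : q.degree < p.degree := degree_sub_lt hdeq hp0 hlc
        have h2 : p.degree ≤ (n : WithBot ℕ) := by
          rw [degree_eq_natDegree hp0] at hp ⊢
          exact_mod_cast Nat.lt_succ_iff.mp (by exact_mod_cast hp)
        exact lt_of_lt_of_le h1 h2
      have key := ih q hqdeg
      have hqe : ∀ s : ℤ, q.eval s = p.eval s - p.eval (s + 1) := by
        intro s; simp [hq, eval_comp]
      set F : ℕ → ℤ := fun s => (-1)^s * ((n+1).choose s : ℤ) * p.eval (s : ℤ) with hF
      set B : ℕ → ℤ := fun s => (-1)^s * (n.choose s : ℤ) * p.eval (s : ℤ) with hB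
      set G : ℕ → ℤ := fun s => (-1)^s * (n.choose s : ℤ) * q.eval (s : ℤ) with hG
      have e1 : ∀ s : ℕ, F (s+1) = G s - B s + B (s+1) := by
        intro s
        simp only [hF, hB, hG, hqe]
        rw [Nat.choose_succ_succ]
        push_cast
        ring
      have c1 : ∑ s ∈ range (n+2), F s = (∑ s ∈ range (n+1), F (s+1)) + F 0 :=
        Finset.sum_range_succ' F (n+1)
      have c2 : ∑ s ∈ range (n+1), F (s+1)
          = (∑ s ∈ range (n+1), G s) - (∑ s ∈ range (n+1), B s)
            + ∑ s ∈ range (n+1), B (s+1) := by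
        rw [Finset.sum_congr rfl (fun s _ => e1 s), Finset.sum_add_distrib,
          Finset.sum_sub_distrib]
      have c3 : (∑ s ∈ range (n+1), B (s+1)) + B 0 = ∑ s ∈ range (n+2), B s :=
        (Finset.sum_range_succ' B (n+1)).symm
      have c4 : ∑ s ∈ range (n+2), B s = (∑ s ∈ range (n+1), B s) + B (n+1) :=
        Finset.sum_range_succ B (n+1)
      have c5 : B (n+1) = 0 := by simp [hB, Nat.choose_succ_self]
      have c6 : F 0 = B 0 := by simp [hF, hB]
      have c7 : ∑ s ∈ range (n+1), G s = 0 := key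
      show ∑ s ∈ range (n+2), F s = 0
      rw [c1, c2, c7]
      linarith [c3, c4, c5, c6]

lemma altsum_falling (n : ℕ) :
    ∑ s ∈ range (n+1), (-1)^s * (n.choose s : ℤ) * (∏ i ∈ range n, ((s:ℤ) - i))
      = (-1)^n * n.factorial := by
  rw [Finset.sum_eq_single n]
  · rw [Nat.choose_self]
    have h1 : ∏ i ∈ range n, ((n:ℤ) - i) = ((∏ i ∈ range n, (n - i) : ℕ) : ℤ) := by
      rw [Nat.cast_prod]
      exact Finset.prod_congr rfl fun i hi => by
        rw [Nat.cast_sub (le_of_lt (Finset.mem_range.mp hi))]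
    have h2 : (∏ i ∈ range n, (n - i)) = n.factorial := by
      have := Finset.prod_range_reflect (fun j => j + 1) n
      rw [Finset.prod_range_add_one_eq_factorial] at this
      rw [← this]
      exact Finset.prod_congr rfl fun i hi => by
        have := Finset.mem_range.mp hi; omega
    rw [h1, h2]; push_cast; ring
  · intro s hs hne
    have hslt : s < n := by
      rcases Nat.lt_succ_iff_lt_or_eq.mp (Finset.mem_range.mp hs) with h | h
      · exact h
      · exact absurd h hne
    have : ∏ i ∈ range n, ((s:ℤ) - i) = 0 :=
      Finset.prod_eq_zero (Finset.mem_range.mpr hslt) (by simp)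
    rw [this, mul_zero]
  · intro h; exact absurd (Finset.self_mem_range_succ n) h

lemma fact_shift (t j : ℕ) : (t + j).factorial = t.factorial * ∏ i ∈ range j, (t + 1 + i) := by
  induction j with
  | zero => simp
  | succ m ihm =>
    rw [Finset.prod_range_succ, ← mul_assoc, ← ihm, show t + (m+1) = (t+m) + 1 from rfl,
      Nat.factorial_succ]
    ring

noncomputable def Pj (j : ℕ) : ℤ[X] := ∏ i ∈ range j, (X + C ((i : ℤ) + 1))

lemma Pj_monic (j : ℕ) : (Pj j).Monic :=
  monic_prod_of_monic _ _ fun i _ => monic_X_add_C _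

lemma Pj_natDegree (j : ℕ) : (Pj j).natDegree = j := by
  rw [Pj, natDegree_prod_of_monic _ _ (fun i _ => monic_X_add_C _)]
  simp only [natDegree_X_add_C]
  simp

lemma Pj_eval (j t : ℕ) : (Pj j).eval (t : ℤ) = ((∏ i ∈ range j, (t + 1 + i) : ℕ) : ℤ) := by
  rw [Pj, eval_prod, Nat.cast_prod]
  exact Finset.prod_congr rfl fun i _ => by
    simp only [eval_add, eval_X, eval_C]; push_cast; ring

lemma Tsum_eq (n j : ℕ) (hj : j ≤ n) :
    ∑ s ∈ range (n+1), (-1)^s * (n.choose s : ℤ)^2 * s.factorial * (n - s + j).factorial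
      = if j = n then ((n.factorial : ℤ))^2 else 0 := by
  have hterm : ∀ s ∈ range (n+1),
      (-1:ℤ)^s * (n.choose s : ℤ)^2 * s.factorial * (n - s + j).factorial
        = (n.factorial : ℤ) * ((-1)^n * ((-1)^(n-s) * ((n.choose (n-s)) : ℤ)
              * (Pj j).eval (((n - s : ℕ)) : ℤ))) := by
    intro s hs
    have hsn : s ≤ n := Nat.lt_succ_iff.mp (Finset.mem_range.mp hs)
    have h1 : (n.choose s) * s.factorial * (n - s).factorial = n.factorial :=
      Nat.choose_mul_factorial_mul_factorial hsn
    have h2 : (n - s + j).factorial = (n - s).factorial * ∏ i ∈ range j, (n - s + 1 + i) :=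
      fact_shift _ _
    have h3 : (n.choose s : ℤ)^2 * s.factorial * (n-s+j).factorial
        = (n.factorial : ℤ) * ((n.choose s) * ((∏ i ∈ range j, (n - s + 1 + i) : ℕ))) := by
      push_cast [h2]
      rw [← h1]
      push_cast
      ring
    have h4 : (-1:ℤ)^s = (-1)^n * (-1)^(n-s) := by
      rw [← pow_add, show n + (n - s) = 2*(n-s) + s by omega, pow_add, pow_mul]
      simp
    rw [Pj_eval, Nat.choose_symm hsn]
    calc (-1:ℤ)^s * (n.choose s : ℤ)^2 * s.factorial * (n - s + j).factorial
        = (-1)^s * ((n.choose s : ℤ)^2 * s.factorial * (n - s + j).factorial) := by ring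
      _ = (-1)^s * ((n.factorial : ℤ) * ((n.choose s)
            * ((∏ i ∈ range j, (n - s + 1 + i) : ℕ)))) := by rw [h3]
      _ = _ := by rw [h4]; ring
  rw [Finset.sum_congr rfl hterm, ← Finset.mul_sum, ← Finset.mul_sum]
  have hreflect : ∑ s ∈ range (n+1),
      ((-1:ℤ))^(n-s) * ((n.choose (n-s)) : ℤ) * (Pj j).eval (((n - s : ℕ)) : ℤ)
      = ∑ s ∈ range (n+1), (-1)^s * ((n.choose s) : ℤ) * (Pj j).eval ((s : ℕ) : ℤ) := by
    have := Finset.sum_range_reflect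
      (fun s => ((-1:ℤ))^s * ((n.choose s) : ℤ) * (Pj j).eval ((s : ℕ) : ℤ)) (n+1)
    rw [← this]
    exact Finset.sum_congr rfl fun s hs => by
      have : n + 1 - 1 - s = n - s := by omega
      rw [this]
  rw [hreflect]
  rcases eq_or_lt_of_le hj with rfl | hlt
  · have hPq : ∑ s ∈ range (j+1), (-1:ℤ)^s * ((j.choose s) : ℤ) * (Pj j).eval ((s : ℕ) : ℤ)
        = (-1)^j * j.factorial := by
      set q : ℤ[X] := ∏ i ∈ range j, (X - C (i : ℤ)) with hqdef
      have hqmonic : q.Monic := monic_prod_of_monic _ _ fun i _ => monic_X_sub_C _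
      have hqdeg : q.natDegree = j := by
        rw [hqdef, natDegree_prod_of_monic _ _ (fun i _ => monic_X_sub_C _)]
        simp only [natDegree_X_sub_C]
        simp
      have h1 : (Pj j).degree = q.degree := by
        rw [degree_eq_natDegree (Pj_monic j).ne_zero, degree_eq_natDegree hqmonic.ne_zero,
          Pj_natDegree, hqdeg]
      have hdiff : (Pj j - q).degree < (j : WithBot ℕ) := by
        have := degree_sub_lt h1 (Pj_monic j).ne_zero
          ((Pj_monic j).leadingCoeff.trans hqmonic.leadingCoeff.symm)
        rwa [degree_eq_natDegree (Pj_monic j).ne_zero, Pj_natDegree] at this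
      have hz := altsum_zero j (Pj j - q) hdiff
      have hsplit : ∀ s ∈ range (j+1),
          (-1:ℤ)^s * ((j.choose s) : ℤ) * (Pj j).eval ((s:ℕ):ℤ)
          = (-1:ℤ)^s * ((j.choose s) : ℤ) * q.eval ((s:ℕ):ℤ)
            + (-1:ℤ)^s * ((j.choose s) : ℤ) * (Pj j - q).eval ((s:ℕ):ℤ) := by
        intro s _
        simp only [eval_sub]
        ring
      rw [Finset.sum_congr rfl hsplit, Finset.sum_add_distrib, hz, add_zero]
      have hfall : ∀ s : ℕ, q.eval ((s:ℕ):ℤ) = ∏ i ∈ range j, ((s:ℤ) - i) := by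
        intro s
        simp [hqdef, eval_prod]
      rw [Finset.sum_congr rfl (fun s _ => by rw [hfall s])]
      exact altsum_falling j
    rw [if_pos rfl, hPq]
    ring_nf
    rw [mul_comm j 2, pow_mul]
    norm_num
  · rw [if_neg (by omega)]
    have h0 : ∑ s ∈ range (n+1), (-1:ℤ)^s * ((n.choose s) : ℤ) * (Pj j).eval ((s : ℕ) : ℤ)
        = 0 := by
      apply altsum_zero
      calc (Pj j).degree ≤ (Pj j).natDegree := degree_le_natDegree
        _ < (n : WithBot ℕ) := by rw [Pj_natDegree]; exact_mod_cast hlt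
    rw [h0, mul_zero, mul_zero]

/-! ### The Legendre polynomial as a polynomial -/

lemma genBinom_nat (n m : ℕ) (h : m ≤ n) : genBinom (n : ℝ) m = n.choose m := by
  have key : ∏ i ∈ Finset.range m, ((n : ℝ) - i) = (n.descFactorial m : ℝ) := by
    induction m with
    | zero => simp
    | succ t iht =>
      rw [Finset.prod_range_succ, iht (le_of_lt (Nat.lt_of_succ_le h)),
        Nat.descFactorial_succ]
      rw [Nat.cast_mul, Nat.cast_sub (le_of_lt (Nat.lt_of_succ_le h))]
      ring
  rw [genBinom, key, Nat.descFactorial_eq_factorial_mul_choose]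
  push_cast
  rw [mul_comm, mul_div_assoc, div_self (by exact_mod_cast m.factorial_ne_zero), mul_one]

lemma legendreP_eval (n : ℕ) (η : ℝ) :
    legendreP n η = ∑ s ∈ Finset.range (n+1),
      (n.choose s : ℝ)^2 * (((η - 1) / 2) ^ s * ((η + 1) / 2) ^ (n - s)) := by
  rw [legendreP, jacobiP]
  refine Finset.sum_congr rfl fun s hs => ?_
  have hsn : s ≤ n := Nat.lt_succ_iff.mp (Finset.mem_range.mp hs)
  rw [add_zero, genBinom_nat n (n - s) (Nat.sub_le n s), genBinom_nat n s hsn,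
    Nat.choose_symm hsn]
  ring

noncomputable def Kp (n : ℕ) : ℝ[X] :=
  ∑ s ∈ Finset.range (n+1), C ((n.choose s : ℝ)^2) * ((X - C 1) ^ s * X ^ (n - s))

lemma legendreP_eq (n : ℕ) (η : ℝ) : legendreP n η = (Kp n).eval ((1 + η)/2) := by
  rw [legendreP_eval, Kp, eval_finset_sum]
  refine Finset.sum_congr rfl fun s hs => ?_
  simp only [eval_mul, eval_pow, eval_sub, eval_C, eval_X]
  have h1 : (1 + η)/2 - 1 = (η - 1)/2 := by ring
  have h2 : (1 + η)/2 = (η + 1)/2 := by ring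
  rw [h1, h2]

lemma legendreP_fun (n : ℕ) : legendreP n = fun η => (Kp n).eval ((1 + η)/2) :=
  funext (legendreP_eq n)

lemma legendreP_hasDerivAt (n : ℕ) (η : ℝ) :
    HasDerivAt (legendreP n) ((derivative (Kp n)).eval ((1 + η)/2) * (1/2)) η := by
  rw [legendreP_fun]
  have h1 : HasDerivAt (fun η : ℝ => (1 + η)/2) (1/2) η := by
    have := ((hasDerivAt_id η).const_add 1).div_const 2
    simpa using this
  exact (Polynomial.hasDerivAt (Kp n) ((1 + η)/2)).comp η h1

lemma legendreP_deriv (n : ℕ) :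
    deriv (legendreP n) = fun η => (derivative (Kp n)).eval ((1 + η)/2) * (1/2) :=
  funext fun η => (legendreP_hasDerivAt n η).deriv

lemma legendreP_continuous (n : ℕ) : Continuous (legendreP n) := by
  rw [legendreP_fun]
  exact (Kp n).continuous_aeval.comp (by continuity)

lemma legendreP_one (n : ℕ) : legendreP n 1 = 1 := by
  rw [legendreP_eval]
  rw [Finset.sum_eq_single 0]
  · simp
  · intro s hs hne
    rcases Nat.exists_eq_succ_of_ne_zero hne with ⟨t, rfl⟩
    simp [zero_pow]
  · simp

lemma Kp_natDegree_le (n : ℕ) : (Kp n).natDegree ≤ n := by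
  refine natDegree_sum_le_of_forall_le _ _ fun s hs => ?_
  have hsn : s ≤ n := Nat.lt_succ_iff.mp (Finset.mem_range.mp hs)
  calc (C ((n.choose s : ℝ)^2) * (((X - C 1 : Polynomial ℝ)) ^ s * X ^ (n - s))).natDegree
      ≤ (C ((n.choose s : ℝ)^2)).natDegree
          + (((X - C 1 : Polynomial ℝ)) ^ s * X ^ (n - s)).natDegree :=
        natDegree_mul_le
    _ ≤ 0 + ((((X - C 1 : Polynomial ℝ)) ^ s).natDegree + ((X : Polynomial ℝ) ^ (n - s)).natDegree) := by
        gcongr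
        · exact le_of_eq (natDegree_C _)
        · exact natDegree_mul_le
    _ ≤ 0 + (s + (n - s)) := by
        have e1 : (((X - C 1 : Polynomial ℝ)) ^ s).natDegree ≤ s :=
          natDegree_pow_le.trans (by rw [natDegree_X_sub_C]; omega)
        have e2 : ((X : Polynomial ℝ) ^ (n - s)).natDegree ≤ n - s :=
          natDegree_pow_le.trans (by rw [natDegree_X]; omega)
        omega
    _ ≤ n := by omega

/-! ### The Beta integral -/

lemma Ibeta (a : ℕ) : ∀ b : ℕ,
    (∫ η in (-1:ℝ)..1, (1-η)^a * (1+η)^b)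
      = 2^(a+b+1) * a.factorial * b.factorial / (a+b+1).factorial := by
  induction a with
  | zero =>
    intro b
    simp only [pow_zero, one_mul, Nat.zero_add, Nat.factorial_zero, Nat.cast_one]
    have h := intervalIntegral.integral_comp_add_left (a := (-1:ℝ)) (b := 1)
      (fun x : ℝ => x ^ b) 1
    simp only [add_neg_cancel] at h
    rw [h, integral_pow]
    have hb : ((b:ℝ) + 1) ≠ 0 := by positivity
    rw [Nat.factorial_succ]
    push_cast
    field_simp
    ring
  | succ a iha =>
    intro b
    have hu : ∀ x ∈ Set.uIcc (-1:ℝ) 1, HasDerivAt (fun η : ℝ => (1-η)^(a+1))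
        (-(((a:ℝ)+1) * (1-x)^a)) x := by
      intro x _
      have h1 : HasDerivAt (fun η : ℝ => 1 - η) (-1) x := (hasDerivAt_id x).const_sub 1
      have := h1.fun_pow (a+1)
      simpa using this.congr_deriv (by push_cast; ring)
    have hv : ∀ x ∈ Set.uIcc (-1:ℝ) 1, HasDerivAt (fun η : ℝ => (1+η)^(b+1) / ((b:ℝ)+1))
        ((1+x)^b) x := by
      intro x _
      have h1 : HasDerivAt (fun η : ℝ => 1 + η) 1 x := (hasDerivAt_id x).const_add 1
      have h2 := (h1.pow (b+1)).div_const ((b:ℝ)+1)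
      have hb : ((b:ℝ) + 1) ≠ 0 := by positivity
      refine h2.congr_deriv ?_
      push_cast
      field_simp
    have key := intervalIntegral.integral_mul_deriv_eq_deriv_mul hu hv
      (Continuous.intervalIntegrable (by continuity) _ _)
      (Continuous.intervalIntegrable (by continuity) _ _)
    rw [key]
    have hz1 : ((1:ℝ)-1)^(a+1) = 0 := by norm_num
    have hz2 : ((1:ℝ)+(-1))^(b+1) = 0 := by norm_num
    rw [hz1, hz2]
    have hrw : (∫ x in (-1:ℝ)..1, -(((a:ℝ)+1) * (1-x)^a) * ((1+x)^(b+1) / ((b:ℝ)+1)))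
        = (-(((a:ℝ)+1) / ((b:ℝ)+1))) * ∫ x in (-1:ℝ)..1, (1-x)^a * (1+x)^(b+1) := by
      rw [← intervalIntegral.integral_const_mul]
      refine intervalIntegral.integral_congr fun x _ => ?_
      ring
    rw [hrw, iha (b+1)]
    have hb : ((b:ℝ) + 1) ≠ 0 := by positivity
    have hf : ((a+b+2).factorial : ℝ) ≠ 0 := by exact_mod_cast (a+b+2).factorial_ne_zero
    rw [show a + 1 + b + 1 = a + b + 2 by ring, show a + (b+1) + 1 = a + b + 2 by ring]
    rw [Nat.factorial_succ a, Nat.factorial_succ b]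
    push_cast
    field_simp
    ring

/-! ### Moments -/

lemma Mo_eq (n j : ℕ) (hj : j ≤ n) :
    (∫ η in (-1:ℝ)..1, (1+η)^j * legendreP n η)
      = if j = n then 2^(n+1) * ((n.factorial : ℝ))^2 / ((2*n+1).factorial) else 0 := by
  have h1 : ∀ η : ℝ, (1+η)^j * legendreP n η
      = ∑ s ∈ range (n+1), (n.choose s : ℝ)^2 * ((-1)^s / 2^n)
          * ((1-η)^s * (1+η)^(n-s+j)) := by
    intro η
    rw [legendreP_eval, Finset.mul_sum]
    refine Finset.sum_congr rfl fun s hs => ?_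
    have hsn : s ≤ n := Nat.lt_succ_iff.mp (Finset.mem_range.mp hs)
    have hpow : (2:ℝ)^s * 2^(n-s) = 2^n := by
      rw [← pow_add]; congr 1 <;> omega
    have key : ((η - 1) / 2) ^ s = (-1)^s * (1-η)^s / 2^s := by
      rw [show (η - 1)/2 = -((1-η)/2) by ring, neg_pow, div_pow]
      ring
    have key2 : ((η + 1) / 2) ^ (n-s) = (1+η)^(n-s) / 2^(n-s) := by
      rw [show (η+1)/2 = (1+η)/2 by ring, div_pow]
    rw [key, key2, pow_add (1+η) (n-s) j, ← hpow]
    ring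
  rw [intervalIntegral.integral_congr (fun η _ => h1 η)]
  rw [intervalIntegral.integral_finset_sum (fun s _ =>
    Continuous.intervalIntegrable (by continuity) _ _)]
  have h2 : ∀ s ∈ range (n+1),
      (∫ η in (-1:ℝ)..1, (n.choose s : ℝ)^2 * ((-1)^s / 2^n) * ((1-η)^s * (1+η)^(n-s+j)))
        = (2:ℝ)^(j+1) / ((n+j+1).factorial)
            * ((-1)^s * (n.choose s : ℝ)^2 * s.factorial * (n-s+j).factorial) := by
    intro s hs
    have hsn : s ≤ n := Nat.lt_succ_iff.mp (Finset.mem_range.mp hs)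
    rw [intervalIntegral.integral_const_mul, Ibeta s (n-s+j)]
    have hes : s + (n-s+j) = n + j := by omega
    rw [hes]
    have hfne : ((n+j+1).factorial : ℝ) ≠ 0 := by exact_mod_cast (n+j+1).factorial_ne_zero
    have h2n : (2:ℝ)^n ≠ 0 := by positivity
    have hp : (2:ℝ)^(n+j+1) = 2^n * 2^(j+1) := by rw [← pow_add]; congr 1 <;> omega
    rw [hp]
    field_simp
    try ring
  rw [Finset.sum_congr rfl h2, ← Finset.mul_sum]
  have hZ := Tsum_eq n j hj
  have hZR : (∑ s ∈ range (n+1),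
      ((-1:ℝ))^s * (n.choose s : ℝ)^2 * s.factorial * (n-s+j).factorial)
      = if j = n then ((n.factorial : ℝ))^2 else 0 := by
    have := congrArg (fun z : ℤ => (z : ℝ)) hZ
    push_cast at this
    split_ifs with h
    · split_ifs at this
      exact_mod_cast this
    · split_ifs at this
      exact_mod_cast this
  rw [hZR]
  split_ifs with h
  · subst h
    have hfne : ((2*j+1).factorial : ℝ) ≠ 0 := by exact_mod_cast (2*j+1).factorial_ne_zero
    rw [show j + j + 1 = 2*j+1 by ring]
    field_simp
    try ring
  · rw [mul_zero]

lemma integral_eval (n : ℕ) (r : Polynomial ℝ) (hr : r.natDegree ≤ n) :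
    (∫ η in (-1:ℝ)..1, legendreP n η * r.eval (1+η))
      = r.coeff n * (2^(n+1) * ((n.factorial : ℝ))^2 / ((2*n+1).factorial)) := by
  have h1 : ∀ η : ℝ, legendreP n η * r.eval (1+η)
      = ∑ i ∈ range (n+1), r.coeff i * ((1+η)^i * legendreP n η) := by
    intro η
    rw [eval_eq_sum_range' (Nat.lt_succ_of_le hr), Finset.mul_sum]
    exact Finset.sum_congr rfl fun i _ => by ring
  rw [intervalIntegral.integral_congr (fun η _ => h1 η)]
  rw [intervalIntegral.integral_finset_sum (fun i _ =>
    Continuous.intervalIntegrable (continuous_const.fun_mul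
      (((continuous_const.fun_add continuous_id').fun_pow _).fun_mul (legendreP_continuous n))) _ _)]
  have h2 : ∀ i ∈ range (n+1),
      (∫ η in (-1:ℝ)..1, r.coeff i * ((1+η)^i * legendreP n η))
        = r.coeff i * (if i = n then 2^(n+1) * ((n.factorial : ℝ))^2 / ((2*n+1).factorial)
            else 0) := by
    intro i hi
    have hin : i ≤ n := Nat.lt_succ_iff.mp (Finset.mem_range.mp hi)
    rw [intervalIntegral.integral_const_mul, Mo_eq n i hin]
  rw [Finset.sum_congr rfl h2]
  rw [Finset.sum_congr rfl (fun i _ => by rw [mul_ite, mul_zero])]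
  rw [Finset.sum_ite_eq' (range (n+1))]
  simp

lemma orth (n : ℕ) (r : Polynomial ℝ) (hr : r.degree < (n : WithBot ℕ)) :
    (∫ η in (-1:ℝ)..1, legendreP n η * r.eval (1+η)) = 0 := by
  have h1 : r.natDegree ≤ n := natDegree_le_iff_degree_le.mpr (le_of_lt hr)
  rw [integral_eval n r h1, coeff_eq_zero_of_degree_lt hr, zero_mul]

/-! ### Norm of Legendre polynomials -/

lemma legendre_sq_integral (k : ℕ) :
    (∫ η in (-1:ℝ)..1, (legendreP k η)^2) = 2 / (2*(k:ℝ)+1) := by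
  have h1 : ∀ η : ℝ, (legendreP k η)^2
      = ∑ s ∈ range (k+1), (k.choose s : ℝ)^2
          * (legendreP k η * (((η - 1) / 2) ^ s * ((η + 1) / 2) ^ (k - s))) := by
    intro η
    rw [sq]
    nth_rewrite 2 [legendreP_eval k η]
    rw [Finset.mul_sum]
    exact Finset.sum_congr rfl fun s _ => by ring
  rw [intervalIntegral.integral_congr (fun η _ => h1 η)]
  rw [intervalIntegral.integral_finset_sum (fun s _ =>
    Continuous.intervalIntegrable (continuous_const.fun_mul
      ((legendreP_continuous k).fun_mul (by continuity))) _ _)]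
  have hJ : ∀ s ∈ range (k+1),
      (∫ η in (-1:ℝ)..1, (k.choose s : ℝ)^2
          * (legendreP k η * (((η - 1) / 2) ^ s * ((η + 1) / 2) ^ (k - s))))
        = (k.choose s : ℝ)^2
            * ((1/2^k) * (2^(k+1) * ((k.factorial : ℝ))^2 / ((2*k+1).factorial))) := by
    intro s hs
    have hsk : s ≤ k := Nat.lt_succ_iff.mp (Finset.mem_range.mp hs)
    set R : Polynomial ℝ := C ((-1:ℝ)^s / 2^k) * ((C 2 - X)^s * X^(k-s)) with hR
    have hReval : ∀ η : ℝ, R.eval (1+η) = ((η - 1) / 2) ^ s * ((η + 1) / 2) ^ (k - s) := by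
      intro η
      simp only [hR, eval_mul, eval_C, eval_pow, eval_sub, eval_X]
      have hpow : (2:ℝ)^s * 2^(k-s) = 2^k := by rw [← pow_add]; congr 1 <;> omega
      have k1 : ((η - 1) / 2) ^ s = (-1)^s * (2 - (1+η))^s / 2^s := by
        rw [show (η - 1)/2 = -((2 - (1+η))/2) by ring, neg_pow, div_pow]
        ring
      have k2 : ((η + 1) / 2) ^ (k-s) = (1+η)^(k-s) / 2^(k-s) := by
        rw [show (η+1)/2 = (1+η)/2 by ring, div_pow]
      rw [k1, k2, ← hpow]
      ring
    have hCX : (C 2 - X : Polynomial ℝ) = -(X - C 2) := by ring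
    have hndeg : ((C 2 - X : Polynomial ℝ)^s * X^(k-s)).natDegree = k := by
      rw [natDegree_mul (by rw [hCX]; exact pow_ne_zero _ (neg_ne_zero.mpr (X_sub_C_ne_zero 2)))
        (pow_ne_zero _ X_ne_zero)]
      rw [natDegree_pow, natDegree_X_pow, hCX, natDegree_neg, natDegree_X_sub_C]
      omega
    have hRnd : R.natDegree ≤ k := by
      rw [hR]
      refine natDegree_mul_le.trans ?_
      rw [natDegree_C, hndeg]
      omega
    have hcoeff : R.coeff k = 1 / 2^k := by
      rw [hR, coeff_C_mul]
      have hlc : ((C 2 - X : Polynomial ℝ)^s * X^(k-s)).coeff k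
          = ((C 2 - X : Polynomial ℝ)^s * X^(k-s)).leadingCoeff := by
        rw [leadingCoeff, hndeg]
      rw [hlc, leadingCoeff_mul, leadingCoeff_pow, leadingCoeff_pow, hCX, leadingCoeff_neg,
        (monic_X_sub_C (2:ℝ)).leadingCoeff, leadingCoeff_X]
      have hmm : ((-1:ℝ))^s * ((-1:ℝ))^s = 1 := by
        rw [← pow_add, ← two_mul, pow_mul]; norm_num
      rw [one_pow, mul_one, div_mul_eq_mul_div, hmm]
    rw [intervalIntegral.integral_const_mul]
    congr 1
    have := integral_eval k R hRnd
    rw [intervalIntegral.integral_congr (fun η _ => by rw [← hReval η])]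
    rw [this, hcoeff]
    try ring
  rw [Finset.sum_congr rfl hJ, ← Finset.sum_mul]
  have hvan : ∑ s ∈ range (k+1), ((k.choose s : ℝ))^2 = ((2*k).choose k : ℝ) := by
    have hnat : ∑ s ∈ range (k+1), (k.choose s)^2 = (2*k).choose k := by
      rw [two_mul, Nat.add_choose_eq, Finset.Nat.sum_antidiagonal_eq_sum_range_succ_mk]
      exact Finset.sum_congr rfl fun i hi => by
        rw [Nat.choose_symm (Nat.lt_succ_iff.mp (Finset.mem_range.mp hi)), sq]
    exact_mod_cast congrArg (fun z : ℕ => (z : ℝ)) hnat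
  rw [hvan]
  have hkey : ((2*k+1).factorial : ℝ)
      = (2*(k:ℝ)+1) * (((2*k).choose k : ℝ) * ((k.factorial : ℝ))^2) := by
    have hnat : (2*k+1).factorial = (2*k+1) * ((2*k).choose k * (k.factorial * k.factorial)) := by
      rw [Nat.factorial_succ]
      congr 1
      have := Nat.choose_mul_factorial_mul_factorial (show k ≤ 2*k by omega)
      rw [show 2*k - k = k by omega] at this
      rw [← this]
      ring
    have := congrArg (fun z : ℕ => (z : ℝ)) hnat
    push_cast at this
    rw [this]
    ring
  rw [hkey]
  have hcpos : 0 < (2*k).choose k := Nat.choose_pos (by omega)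
  have hc : ((2*k).choose k : ℝ) ≠ 0 := by exact_mod_cast hcpos.ne'
  have hf : ((k.factorial : ℝ)) ≠ 0 := by exact_mod_cast k.factorial_ne_zero
  have hk1 : (2*(k:ℝ)+1) ≠ 0 := by positivity
  field_simp
  ring

end Aux

set_option maxHeartbeats 1000000

/-- Off-diagonal Galerkin inner products for HiPPO-LegS. -/
theorem legs_offdiagonal (n k : ℕ) (hkn : k < n) :
    (∫ η in (-1:ℝ)..1,
        (legendreP n η + (1 + η) * deriv (legendreP n) η) * legendreP k η) = 2 ∧
    (Real.sqrt (2 * n + 1) / Real.sqrt (2 * k + 1))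
        * (∫ η in (-1:ℝ)..1,
            (legendreP n η + (1 + η) * deriv (legendreP n) η) * legendreP k η)
        / (∫ η in (-1:ℝ)..1, (legendreP k η) ^ 2)
      = Real.sqrt ((2 * n + 1) * (2 * k + 1)) := by
  classical
  have hknn : (k : ℕ) < n := hkn
  -- Part 1
  have h1 : (∫ η in (-1:ℝ)..1,
      (legendreP n η + (1 + η) * deriv (legendreP n) η) * legendreP k η) = 2 := by
    have hu : ∀ x ∈ Set.uIcc (-1:ℝ) 1,
        HasDerivAt (legendreP k) (deriv (legendreP k) x) x := by
      intro x _
      rw [legendreP_deriv]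
      exact legendreP_hasDerivAt k x
    have hv : ∀ x ∈ Set.uIcc (-1:ℝ) 1,
        HasDerivAt (fun η : ℝ => (1 + η) * legendreP n η)
          (legendreP n x + (1 + x) * deriv (legendreP n) x) x := by
      intro x _
      have hd := legendreP_hasDerivAt n x
      have h1x : HasDerivAt (fun η : ℝ => 1 + η) 1 x := (hasDerivAt_id' x).const_add 1
      have hprod := h1x.mul hd
      refine hprod.congr_deriv ?_
      rw [(legendreP_hasDerivAt n x).deriv]
      ring
    have hck : Continuous fun η : ℝ => (Polynomial.derivative (Kp k)).eval ((1+η)/2) :=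
      (Polynomial.derivative (Kp k)).continuous_aeval.comp
        ((continuous_const.add continuous_id').div_const 2)
    have hcn : Continuous fun η : ℝ => (Polynomial.derivative (Kp n)).eval ((1+η)/2) :=
      (Polynomial.derivative (Kp n)).continuous_aeval.comp
        ((continuous_const.add continuous_id').div_const 2)
    have hint1 : IntervalIntegrable (deriv (legendreP k)) MeasureTheory.volume (-1) 1 := by
      rw [legendreP_deriv]
      exact Continuous.intervalIntegrable (hck.mul continuous_const) _ _
    have hint2 : IntervalIntegrable
        (fun x => legendreP n x + (1 + x) * deriv (legendreP n) x)
        MeasureTheory.volume (-1) 1 := by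
      rw [legendreP_deriv]
      exact Continuous.intervalIntegrable
        ((legendreP_continuous n).add ((continuous_const.add continuous_id').mul
          (hcn.mul continuous_const))) _ _
    have key := intervalIntegral.integral_mul_deriv_eq_deriv_mul hu hv hint1 hint2
    have hgoal : (∫ η in (-1:ℝ)..1,
        (legendreP n η + (1 + η) * deriv (legendreP n) η) * legendreP k η)
        = ∫ η in (-1:ℝ)..1,
            legendreP k η * (legendreP n η + (1 + η) * deriv (legendreP n) η) :=
      intervalIntegral.integral_congr fun x _ => mul_comm _ _
    rw [hgoal, key, legendreP_one n, legendreP_one k]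
    have hzero : (∫ x in (-1:ℝ)..1,
        deriv (legendreP k) x * ((1 + x) * legendreP n x)) = 0 := by
      set r : Polynomial ℝ :=
        Polynomial.C (2⁻¹:ℝ) * (Polynomial.X *
          ((Polynomial.derivative (Kp k)).comp (Polynomial.C (2⁻¹:ℝ) * Polynomial.X))) with hr
      have hre : ∀ η : ℝ, deriv (legendreP k) η * ((1 + η) * legendreP n η)
          = legendreP n η * r.eval (1 + η) := by
        intro η
        rw [(legendreP_hasDerivAt k η).deriv]
        simp only [hr, Polynomial.eval_mul, Polynomial.eval_C, Polynomial.eval_X,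
          Polynomial.eval_comp]
        rw [show (2⁻¹:ℝ) * (1 + η) = (1 + η)/2 by ring]
        ring
      have hdeg : r.degree < (n : WithBot ℕ) := by
        by_cases hd0 : Polynomial.derivative (Kp k) = 0
        · have : r = 0 := by rw [hr, hd0]; simp
          rw [this, Polynomial.degree_zero]
          exact WithBot.bot_lt_coe n
        · have hKp1 : 1 ≤ (Kp k).natDegree := by
            by_contra hcon
            push_neg at hcon
            have h0 : (Kp k).natDegree = 0 := by omega
            obtain ⟨a, ha⟩ := Polynomial.natDegree_eq_zero.mp h0
            rw [← ha] at hd0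
            exact hd0 (by simp)
          have hb1 : ((Polynomial.derivative (Kp k)).comp
              (Polynomial.C (2⁻¹:ℝ) * Polynomial.X)).natDegree
              ≤ (Kp k).natDegree - 1 := by
            rw [Polynomial.natDegree_comp]
            have hx : (Polynomial.C (2⁻¹:ℝ) * Polynomial.X).natDegree = 1 := by
              rw [Polynomial.natDegree_C_mul (by norm_num : (2⁻¹:ℝ) ≠ 0),
                Polynomial.natDegree_X]
            rw [hx, mul_one]
            exact Polynomial.natDegree_derivative_le _
          have hnd : r.natDegree ≤ k := by
            rw [hr]
            refine Polynomial.natDegree_mul_le.trans ?_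
            rw [Polynomial.natDegree_C]
            refine le_trans (by exact Nat.add_le_add_left Polynomial.natDegree_mul_le 0) ?_
            rw [Polynomial.natDegree_X]
            have := Kp_natDegree_le k
            omega
          calc r.degree ≤ (r.natDegree : WithBot ℕ) := Polynomial.degree_le_natDegree
            _ < (n : WithBot ℕ) := by
                exact_mod_cast lt_of_le_of_lt hnd hknn
      rw [intervalIntegral.integral_congr (fun η _ => hre η)]
      exact orth n r hdeg
    rw [hzero]
    norm_num
  refine ⟨h1, ?_⟩
  rw [h1, legendre_sq_integral k]
  have hk0 : (0:ℝ) < 2*(k:ℝ)+1 := by positivity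
  have hn0 : (0:ℝ) ≤ 2*(n:ℝ)+1 := by positivity
  have hsq : Real.sqrt (2*(k:ℝ)+1) * Real.sqrt (2*(k:ℝ)+1) = 2*(k:ℝ)+1 :=
    Real.mul_self_sqrt (le_of_lt hk0)
  have hsk : Real.sqrt (2*(k:ℝ)+1) ≠ 0 := by positivity
  rw [Real.sqrt_mul hn0]
  rw [div_div_eq_mul_div]
  calc Real.sqrt (2*(n:ℝ)+1) / Real.sqrt (2*(k:ℝ)+1) * 2 * (2*(k:ℝ)+1) / 2
      = Real.sqrt (2*(n:ℝ)+1) / Real.sqrt (2*(k:ℝ)+1) * (2*(k:ℝ)+1) := by ring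
    _ = Real.sqrt (2*(n:ℝ)+1) / Real.sqrt (2*(k:ℝ)+1)
          * (Real.sqrt (2*(k:ℝ)+1) * Real.sqrt (2*(k:ℝ)+1)) := by rw [hsq]
    _ = Real.sqrt (2*(n:ℝ)+1) * Real.sqrt (2*(k:ℝ)+1) := by
        rw [← mul_assoc, div_mul_cancel₀ _ hsk]
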